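/- arXiv:2605.02141 — 3 statements merged into one kernel-verified Lean document; each statement's English description precedes it below -/
import Mathlib

section
/- Let m, A be positive integers with A/2 ≤ m ≤ A, let δ > 0, η > 0, M > 0. Define X₁(l) = log[(l·e^{ηδ} + (m−l)e^{−ηδ})/A + M] − log[m/A + M] and X₂(l) = log[((m−l)e^{ηδ} + l·e^{−ηδ})/A + M] − log[m/A + M] for integer 0 ≤ l ≤ m. Then X₁(l) + X₂(l) ≥ log(1 + (2M(m/A))/((m/A + M)²) · (cosh(ηδ) − 1)) for every l, i.e., the sum is minimized at l = 0 or l = m. -/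
open Real

/-- Convexity step of the fast-rate lower bound: for `A/2 ≤ m ≤ A`, `δ, η, M > 0`
and any integer `0 ≤ l ≤ m`, the sum `X₁(l) + X₂(l)` is bounded below by its common
endpoint value `log(1 + 2M(m/A)/((m/A + M)²)·(cosh(ηδ) − 1))`. -/
theorem endpoint_convexity_bound
    (m A : ℕ) (hm0 : 0 < m) (hA0 : 0 < A)
    (hmA : (A : ℝ) / 2 ≤ (m : ℝ)) (hmA' : m ≤ A)
    (δ η M : ℝ) (hδ : 0 < δ) (hη : 0 < η) (hM : 0 < M)
    (l : ℕ) (hl : l ≤ m) :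
    (Real.log (((l : ℝ) * Real.exp (η * δ) + ((m : ℝ) - (l : ℝ)) * Real.exp (-(η * δ))) / (A : ℝ) + M)
        - Real.log ((m : ℝ) / (A : ℝ) + M)) +
      (Real.log ((((m : ℝ) - (l : ℝ)) * Real.exp (η * δ) + (l : ℝ) * Real.exp (-(η * δ))) / (A : ℝ) + M)
        - Real.log ((m : ℝ) / (A : ℝ) + M)) ≥
    Real.log (1 + 2 * M * ((m : ℝ) / (A : ℝ)) / (((m : ℝ) / (A : ℝ) + M) ^ 2) *
      ((Real.exp (η * δ) + Real.exp (-(η * δ))) / 2 - 1)) := by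
  set u := Real.exp (η * δ) with hu
  set v := Real.exp (-(η * δ)) with hv
  have hupos : 0 < u := Real.exp_pos _
  have hvpos : 0 < v := Real.exp_pos _
  have huv : u * v = 1 := by
    rw [hu, hv, ← Real.exp_add]; simp
  have hApos : (0 : ℝ) < A := by exact_mod_cast hA0
  have hs : (0 : ℝ) ≤ (l : ℝ) := Nat.cast_nonneg l
  have ht : (0 : ℝ) ≤ (m : ℝ) - (l : ℝ) := by
    have : (l : ℝ) ≤ m := by exact_mod_cast hl
    linarith
  have hmpos : (0 : ℝ) < m := by exact_mod_cast hm0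
  set a := ((l : ℝ) * u + ((m : ℝ) - l) * v) / A + M with ha
  set b := (((m : ℝ) - l) * u + (l : ℝ) * v) / A + M with hb
  set c := (m : ℝ) / A + M with hc
  have hapos : 0 < a := by
    have : 0 ≤ ((l : ℝ) * u + ((m : ℝ) - l) * v) / A := by positivity
    rw [ha]; linarith
  have hbpos : 0 < b := by
    have : 0 ≤ (((m : ℝ) - l) * u + (l : ℝ) * v) / A := by positivity
    rw [hb]; linarith
  have hcpos : 0 < c := by
    have : 0 ≤ (m : ℝ) / A := by positivity
    rw [hc]; linarith
  have hsq : 2 ≤ u ^ 2 + v ^ 2 := by nlinarith [sq_nonneg (u - v)]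
  have hcosh : 0 ≤ (u + v) / 2 - 1 := by nlinarith [sq_nonneg (u - v)]
  set R := 1 + 2 * M * ((m : ℝ) / A) / c ^ 2 * ((u + v) / 2 - 1) with hR
  have hRpos : 0 < R := by
    have h1 : 0 ≤ 2 * M * ((m : ℝ) / A) / c ^ 2 * ((u + v) / 2 - 1) := by positivity
    rw [hR]; linarith
  -- key algebraic inequality: R * c^2 <= a * b
  have hA' : (A : ℝ) ≠ 0 := ne_of_gt hApos
  have hdiff : a * b = c ^ 2 + 2 * M * ((m : ℝ) / A) * ((u + v) / 2 - 1)
      + ((l : ℝ) * ((m : ℝ) - l) * (u ^ 2 + v ^ 2 - 2)) / (A : ℝ) ^ 2 := by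
    rw [ha, hb, hc]
    linear_combination (((l : ℝ) ^ 2 + ((m : ℝ) - l) ^ 2) / (A : ℝ) ^ 2) * huv
  have hK : 0 ≤ ((l : ℝ) * ((m : ℝ) - l) * (u ^ 2 + v ^ 2 - 2)) / (A : ℝ) ^ 2 := by
    apply div_nonneg _ (by positivity)
    exact mul_nonneg (mul_nonneg hs ht) (by linarith)
  have hRc : R * c ^ 2 = c ^ 2 + 2 * M * ((m : ℝ) / A) * ((u + v) / 2 - 1) := by
    rw [hR]; field_simp
  have key : R * c ^ 2 ≤ a * b := by rw [hdiff, hRc]; linarith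
  have hlog : Real.log (R * c ^ 2) ≤ Real.log (a * b) := by
    apply Real.log_le_log (by positivity) key
  rw [Real.log_mul (ne_of_gt hRpos) (ne_of_gt (by positivity : (0:ℝ) < c ^ 2)),
    Real.log_mul (ne_of_gt hapos) (ne_of_gt hbpos), Real.log_pow] at hlog
  push_cast at hlog
  linarith
end

section
/- Consider an offline KL-regularized contextual bandit with contexts S = [S], actions [A+1], η > 0, C ∈ (2, e^η], reference policy π_ref(i|s) = 1/(AC) for i ≤ A and π_ref(A+1|s) = (C−1)/C, reward r(s,i) = 1 for i ∈ [A] and r(s,A+1) = 1 − η⁻¹log(C−1). Then the optimal regularized policy satisfies π*(i|s) = 1/(2A) for i ∈ [A] and π*(A+1|s) = 1/2, and hence the single-policy concentrability C^{π*} = sup_{s,a} π*(a|s)/π_ref(a|s) equals C/2. -/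
/-!
The tilted weights `π_ref(i) · exp (η r(i))` equal `e^η / (A C)` on each of the first `A` arms and,
because `exp (-log (C - 1)) = 1 / (C - 1)` cancels the factor `C - 1` of `π_ref(A+1)`, `e^η / C` on
the last one. So the partition function is `2 e^η / C`, and the density ratio
`π* / π_ref = exp (η r) / Z` is `C / 2` on the first arms and `C / (2 (C - 1)) ≤ C / 2` on the last.
-/

open Finset Real

theorem Fin.sum_ite_val_lt {M : Type*} [AddCommMonoid M] (n : ℕ) (a b : M) :
    ∑ i : Fin (n + 1), (if (i : ℕ) < n then a else b) = n • a + b := by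
  simp [Fin.sum_univ_castSucc]

theorem Real.exp_mul_one_sub_inv_mul_log {η x : ℝ} (hη : η ≠ 0) (hx : 0 < x) :
    exp (η * (1 - η⁻¹ * log x)) = exp η / x := by
  rw [mul_one_sub, mul_inv_cancel_left₀ hη, exp_sub, exp_log hx]

theorem div_two_mul_sub_one_le_div_two {C : ℝ} (hC : 2 ≤ C) : C / (2 * (C - 1)) ≤ C / 2 := by
  gcongr
  linarith

theorem explicit_instance_concentrability_general
    (S A : ℕ) (hS : 0 < S) (hA : 0 < A)
    (η C : ℝ) (hη : 0 < η) (hC : 2 < C)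
    (pref r pstar : Fin S → Fin (A + 1) → ℝ)
    (hpref : ∀ s i, pref s i = if (i : ℕ) < A then 1 / ((A : ℝ) * C) else (C - 1) / C)
    (hr : ∀ s i, r s i = if (i : ℕ) < A then 1 else 1 - η⁻¹ * Real.log (C - 1))
    (hpstar : ∀ s i, pstar s i =
      pref s i * Real.exp (η * r s i) / ∑ j, pref s j * Real.exp (η * r s j)) :
    (∀ s (i : Fin (A + 1)), ((i : ℕ) < A → pstar s i = 1 / (2 * (A : ℝ))) ∧
      ((i : ℕ) = A → pstar s i = 1 / 2)) ∧
    (∀ s i, pstar s i / pref s i ≤ C / 2) ∧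
    (∃ s i, pstar s i / pref s i = C / 2) := by
  have hC1 : 0 < C - 1 := by linarith
  have hweight : ∀ s i, pref s i * exp (η * r s i) =
      if (i : ℕ) < A then exp η / (A * C) else exp η / C := by
    intro s i
    rw [hpref, hr]
    split_ifs
    · field_simp
    · rw [exp_mul_one_sub_inv_mul_log hη.ne' hC1]
      field_simp
  have hZ : ∀ s, ∑ j, pref s j * exp (η * r s j) = 2 * exp η / C := by
    intro s
    simp only [hweight, Fin.sum_ite_val_lt, nsmul_eq_mul]
    field_simp
    ring
  have hpstar_val : ∀ s i, pstar s i =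
      if (i : ℕ) < A then 1 / (2 * (A : ℝ)) else 1 / 2 := by
    intro s i
    rw [hpstar, hweight, hZ]
    split_ifs <;> field_simp
  have hratio : ∀ s i, pstar s i / pref s i =
      if (i : ℕ) < A then C / 2 else C / (2 * (C - 1)) := by
    intro s i
    rw [hpstar_val, hpref]
    split_ifs <;> field_simp
  refine ⟨fun s i => ⟨fun hi => ?_, fun hi => ?_⟩, fun s i => ?_, ⟨0, hS⟩, ⟨0, by omega⟩, ?_⟩
  · simp [hpstar_val, hi]
  · simp [hpstar_val, hi]
  · rw [hratio]
    split_ifs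
    exacts [le_rfl, div_two_mul_sub_one_le_div_two hC.le]
  · simp [hratio, hA]

/-- For the explicit contextual-bandit instance with `π_ref(i|s) = 1/(AC)` for `i ≤ A`,
`π_ref(A+1|s) = (C−1)/C`, reward `1` on the first `A` arms and `1 − η⁻¹log(C−1)` on the
last arm, the KL-regularized optimal policy is `π*(i|s) = 1/(2A)` for `i ∈ [A]` and
`π*(A+1|s) = 1/2`, and the single-policy concentrability equals `C/2`. -/
theorem explicit_instance_concentrability
    (S A : ℕ) (hS : 0 < S) (hA : 0 < A)
    (η C : ℝ) (hη : 0 < η) (hC : 2 < C) (hC' : C ≤ Real.exp η)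
    (pref r pstar : Fin S → Fin (A + 1) → ℝ)
    (hpref : ∀ s i, pref s i = if (i : ℕ) < A then 1 / ((A : ℝ) * C) else (C - 1) / C)
    (hr : ∀ s i, r s i = if (i : ℕ) < A then 1 else 1 - η⁻¹ * Real.log (C - 1))
    (hpstar : ∀ s i, pstar s i =
      pref s i * Real.exp (η * r s i) / ∑ j, pref s j * Real.exp (η * r s j)) :
    (∀ s (i : Fin (A + 1)), ((i : ℕ) < A → pstar s i = 1 / (2 * (A : ℝ))) ∧
      ((i : ℕ) = A → pstar s i = 1 / 2)) ∧
    (∀ s i, pstar s i / pref s i ≤ C / 2) ∧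
    (∃ s i, pstar s i / pref s i = C / 2) :=
  explicit_instance_concentrability_general S A hS hA η C hη hC pref r pstar hpref hr hpstar
end

section
/- Let Z₀, Z₁, …, Z_n be a martingale with |Z_i − Z_{i−1}| ≤ c_i almost surely for constants c_i > 0 and with conditional variances E[(Z_i − Z_{i−1})² | F_{i−1}] ≤ σ_i². Then for all t ≥ 0, P(Z_n − Z₀ ≥ t) ≤ exp( −t² / (2 Σ_{i=1}^n σ_i² + 2Mt/3) ), where M = max_i c_i. -/
open MeasureTheory Real Finset
open scoped Nat

/-!
Bernstein's argument, run along the martingale. Comparing the exponential series with a geometric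
series (using `(k + 2)! ≥ 2 * 3 ^ k`) gives `exp x ≤ 1 + x + x² / (2 (1 - A / 3))` for
`|x| ≤ A < 3`. For an increment `D = Z i - Z (i - 1)` the conditional mean of `L D` vanishes and
its conditional second moment is at most `L² σ_i²`, so `E[exp (L D) | ℱ (i - 1)]` is at most
`exp (L² σ_i² / (2 (1 - L M / 3)))`. Pulling out the `ℱ (i - 1)`-measurable factor and iterating
bounds `E[exp (L (Z n - Z 0))]` by `exp (L² v / (2 (1 - L M / 3)))` with `v = ∑ σ_i²`, and
Markov's inequality with `L = t / (v + M t / 2)` gives the claim. (The minimiser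
`t / (v + M t / 3)` of the exponent violates `L M < 3` when `v = 0`; the smaller choice still
reaches the stated bound.)
-/

theorem Real.exp_le_one_add_add_sq_div {x A : ℝ} (hx : |x| ≤ A) (hA : A < 3) :
    exp x ≤ 1 + x + x ^ 2 / (2 * (1 - A / 3)) := by
  have hA0 : 0 ≤ A := (abs_nonneg x).trans hx
  have hgeom : HasSum (fun k : ℕ => x ^ 2 / 2 * (A / 3) ^ k) (x ^ 2 / 2 * (1 - A / 3)⁻¹) :=
    (hasSum_geometric_of_lt_one (by positivity) (by linarith)).mul_left _
  have htail : Summable fun k : ℕ => x ^ (k + 2) / (k + 2)! :=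
    (summable_nat_add_iff 2).mpr (summable_pow_div_factorial x)
  have hterm (k : ℕ) : x ^ (k + 2) / (k + 2)! ≤ x ^ 2 / 2 * (A / 3) ^ k := by
    have hfact : (2 * 3 ^ k : ℝ) ≤ (k + 2)! := by
      exact_mod_cast (Nat.factorial_mul_pow_le_factorial (m := 2) (n := k)).trans_eq
        (by rw [add_comm])
    have hpow : x ^ k ≤ A ^ k :=
      (le_abs_self _).trans ((abs_pow x k).trans_le (pow_le_pow_left₀ (abs_nonneg x) hx k))
    rw [div_le_iff₀ (by positivity)]
    calc x ^ (k + 2) = x ^ 2 * x ^ k := by ring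
      _ ≤ x ^ 2 * A ^ k := by gcongr
      _ = x ^ 2 / 2 * (A / 3) ^ k * (2 * 3 ^ k) := by rw [div_pow]; field_simp
      _ ≤ x ^ 2 / 2 * (A / 3) ^ k * (k + 2)! := by gcongr
  have hexp : exp x = 1 + x + ∑' k : ℕ, x ^ (k + 2) / (k + 2)! := by
    rw [exp_eq_exp_ℝ, NormedSpace.exp_eq_tsum_div]
    dsimp only
    rw [← (summable_pow_div_factorial x).sum_add_tsum_nat_add 2]
    simp [sum_range_succ]
  have hA3 : 1 - A / 3 ≠ 0 := by linarith
  calc exp x = 1 + x + ∑' k : ℕ, x ^ (k + 2) / (k + 2)! := hexp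
    _ ≤ 1 + x + x ^ 2 / 2 * (1 - A / 3)⁻¹ := by
      gcongr
      exact (htail.tsum_le_tsum hterm hgeom.summable).trans_eq hgeom.tsum_eq
    _ = 1 + x + x ^ 2 / (2 * (1 - A / 3)) := by field_simp

theorem exists_chernoff_exponent_le_bernstein {v M t : ℝ} (hv : 0 ≤ v) (hM : 0 < M)
    (ht : 0 ≤ t) : ∃ L, 0 ≤ L ∧ L * M < 3 ∧
      -L * t + L ^ 2 / (2 * (1 - L * M / 3)) * v ≤ -t ^ 2 / (2 * v + 2 * M * t / 3) := by
  rcases ht.eq_or_lt with rfl | ht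
  · exact ⟨0, le_rfl, by simp, by simp⟩
  have he : 0 < v + M * t / 2 := by positivity
  refine ⟨t / (v + M * t / 2), by positivity, ?_, ?_⟩
  · rw [div_mul_eq_mul_div, div_lt_iff₀ he]
    nlinarith
  · have he' : 0 < v + M * t / 6 := by positivity
    have hden : 1 - t / (v + M * t / 2) * M / 3 = (v + M * t / 6) / (v + M * t / 2) := by
      field_simp
      ring
    have hLHS : -(t / (v + M * t / 2)) * t + (t / (v + M * t / 2)) ^ 2 /
        (2 * ((v + M * t / 6) / (v + M * t / 2))) * v =
        -(t ^ 2 * (v + M * t / 3) / (2 * (v + M * t / 2) * (v + M * t / 6))) := by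
      field_simp
      ring
    rw [hden, hLHS, neg_div, neg_le_neg_iff, div_le_div_iff₀ (by positivity) (by positivity)]
    have : 0 ≤ t ^ 2 * (M * t) ^ 2 := by positivity
    nlinarith

section

variable {Ω : Type*} {m m0 : MeasurableSpace Ω} {μ : Measure Ω}

theorem condExp_exp_le_of_abs_le [IsFiniteMeasure μ] (hm : m ≤ m0) {Y : Ω → ℝ}
    (hY : AEStronglyMeasurable Y μ) {A s : ℝ} (hA : A < 3) (hbdd : ∀ᵐ ω ∂μ, |Y ω| ≤ A)
    (hmean : μ[Y|m] =ᵐ[μ] 0) (hvar : ∀ᵐ ω ∂μ, μ[fun ω => Y ω ^ 2|m] ω ≤ s) :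
    μ[fun ω => exp (Y ω)|m] ≤ᵐ[μ] fun _ => exp (s / (2 * (1 - A / 3))) := by
  set K := (2 * (1 - A / 3))⁻¹
  have hK : 0 ≤ K := inv_nonneg.mpr (by linarith)
  have hY_int : Integrable Y μ := .of_bound hY A hbdd
  have hY2_int : Integrable (fun ω => Y ω ^ 2) μ := by
    refine .of_bound (hY.pow 2) (A ^ 2) ?_
    filter_upwards [hbdd] with ω hω
    simpa [abs_pow] using pow_le_pow_left₀ (abs_nonneg _) hω 2
  have hexp_int : Integrable (fun ω => exp (Y ω)) μ := by
    refine .of_bound (continuous_exp.comp_aestronglyMeasurable hY) (exp A) ?_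
    filter_upwards [hbdd] with ω hω
    simpa using (le_abs_self _).trans hω
  have hquad : (fun ω => exp (Y ω)) ≤ᵐ[μ] (fun _ => 1) + Y + K • fun ω => Y ω ^ 2 := by
    filter_upwards [hbdd] with ω hω
    simpa [K, div_eq_mul_inv, mul_comm] using exp_le_one_add_add_sq_div hω hA
  have hquad_int : Integrable ((fun _ => (1 : ℝ)) + Y + K • fun ω => Y ω ^ 2) μ :=
    ((integrable_const 1).add hY_int).add (hY2_int.smul K)
  filter_upwards [condExp_mono hexp_int hquad_int hquad,
    condExp_add ((integrable_const 1).add hY_int) (hY2_int.smul K) m,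
    condExp_add (integrable_const 1) hY_int m, condExp_smul K (fun ω => Y ω ^ 2) m, hmean, hvar]
    with ω hmono hadd hadd' hsmul h0 hs
  rw [condExp_const hm] at hadd'
  simp only [Pi.add_apply, Pi.smul_apply, Pi.zero_apply, smul_eq_mul] at hmono hadd hadd' hsmul h0
  calc _ ≤ _ := hmono
    _ = 1 + K * μ[fun ω => Y ω ^ 2|m] ω := by rw [hadd, hadd', hsmul, h0, add_zero]
    _ ≤ 1 + K * s := by gcongr
    _ ≤ exp (K * s) := by linarith [add_one_le_exp (K * s)]
    _ = exp (s / (2 * (1 - A / 3))) := by rw [div_eq_mul_inv, mul_comm]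

theorem integrable_exp_sum_range [IsFiniteMeasure μ] {Y : ℕ → Ω → ℝ} {C : ℝ} {n : ℕ}
    (hY : ∀ i, AEStronglyMeasurable (Y i) μ) (hbdd : ∀ i < n, ∀ᵐ ω ∂μ, |Y i ω| ≤ C) :
    Integrable (fun ω => exp (∑ i ∈ range n, Y i ω)) μ := by
  refine .of_bound (continuous_exp.comp_aestronglyMeasurable
    (aestronglyMeasurable_fun_sum _ fun i _ => hY i)) (exp (n * C)) ?_
  filter_upwards [(ae_ball_iff (Set.to_countable (Set.Iio n))).mpr hbdd] with ω hω
  rw [norm_of_nonneg (exp_pos _).le, exp_le_exp]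
  calc ∑ i ∈ range n, Y i ω ≤ ∑ i ∈ range n, C :=
        sum_le_sum fun i hi => (le_abs_self _).trans (hω i (mem_range.mp hi))
    _ = n * C := by simp

theorem integral_exp_sum_range_le [IsProbabilityMeasure μ] {ℱ : Filtration ℕ m0}
    {Y : ℕ → Ω → ℝ} {a : ℕ → ℝ} {C : ℝ} {n : ℕ}
    (hY : ∀ i, StronglyMeasurable[ℱ (i + 1)] (Y i)) (hbdd : ∀ i < n, ∀ᵐ ω ∂μ, |Y i ω| ≤ C)
    (hcond : ∀ i < n, μ[fun ω => exp (Y i ω)|ℱ i] ≤ᵐ[μ] fun _ => exp (a i)) :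
    ∫ ω, exp (∑ i ∈ range n, Y i ω) ∂μ ≤ exp (∑ i ∈ range n, a i) := by
  have hY' i : AEStronglyMeasurable (Y i) μ := ((hY i).mono (ℱ.le _)).aestronglyMeasurable
  induction n with
  | zero => simp
  | succ k ih =>
    have hSk : StronglyMeasurable[ℱ k] fun ω => exp (∑ i ∈ range k, Y i ω) :=
      continuous_exp.comp_stronglyMeasurable <| stronglyMeasurable_fun_sum _
        fun i hi => (hY i).mono (ℱ.mono (mem_range.mp hi))
    have hSk_int : Integrable (fun ω => exp (∑ i ∈ range k, Y i ω)) μ :=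
      integrable_exp_sum_range hY' fun i hi => hbdd i (by omega)
    have hYk_int : Integrable (fun ω => exp (Y k ω)) μ := by
      simpa using
        integrable_exp_sum_range (n := 1) (fun _ => hY' k) fun _ _ => hbdd k (by omega)
    have hsplit : (fun ω => exp (∑ i ∈ range (k + 1), Y i ω)) =
        (fun ω => exp (∑ i ∈ range k, Y i ω)) * fun ω => exp (Y k ω) := by
      ext ω; simp [sum_range_succ, exp_add]
    calc ∫ ω, exp (∑ i ∈ range (k + 1), Y i ω) ∂μ
        = ∫ ω, μ[(fun ω => exp (∑ i ∈ range k, Y i ω)) * fun ω => exp (Y k ω)|ℱ k] ω ∂μ := by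
          rw [hsplit, integral_condExp (ℱ.le k)]
      _ ≤ ∫ ω, exp (∑ i ∈ range k, Y i ω) * exp (a k) ∂μ := by
          refine integral_mono_ae integrable_condExp (hSk_int.mul_const _) ?_
          filter_upwards [condExp_mul_of_stronglyMeasurable_left hSk
            (hsplit ▸ integrable_exp_sum_range hY' hbdd) hYk_int, hcond k (by omega)]
            with ω hpull hk
          rw [hpull]
          exact mul_le_mul_of_nonneg_left hk (exp_pos _).le
      _ ≤ exp (∑ i ∈ range k, a i) * exp (a k) := by
          rw [integral_mul_const]
          gcongr
          exact ih (fun i hi => hbdd i (by omega)) fun i hi => hcond i (by omega)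
      _ = exp (∑ i ∈ range (k + 1), a i) := by rw [sum_range_succ, exp_add]

namespace MeasureTheory.Martingale

variable [IsProbabilityMeasure μ] {ℱ : Filtration ℕ m0} {Z : ℕ → Ω → ℝ}

theorem condExp_add_one_sub_ae_eq_zero (hZ : Martingale Z ℱ μ) (i : ℕ) :
    μ[fun ω => Z (i + 1) ω - Z i ω|ℱ i] =ᵐ[μ] 0 := by
  filter_upwards [condExp_sub (hZ.integrable (i + 1)) (hZ.integrable i) (ℱ i),
    hZ.condExp_ae_eq (i.le_add_right 1)] with ω hsub hnext
  rw [condExp_of_stronglyMeasurable (ℱ.le i) (hZ.stronglyAdapted i) (hZ.integrable i),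
    Pi.sub_apply, hnext, sub_self] at hsub
  exact hsub

theorem condExp_exp_mul_add_one_sub_le (hZ : Martingale Z ℱ μ) {i : ℕ} {M L s : ℝ}
    (hL : 0 ≤ L) (hLM : L * M < 3) (hbdd : ∀ᵐ ω ∂μ, |Z (i + 1) ω - Z i ω| ≤ M)
    (hvar : ∀ᵐ ω ∂μ, μ[fun ω => (Z (i + 1) ω - Z i ω) ^ 2|ℱ i] ω ≤ s) :
    μ[fun ω => exp (L * (Z (i + 1) ω - Z i ω))|ℱ i] ≤ᵐ[μ]
      fun _ => exp (L ^ 2 / (2 * (1 - L * M / 3)) * s) := by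
  set D : Ω → ℝ := fun ω => Z (i + 1) ω - Z i ω
  have hD : AEStronglyMeasurable D μ :=
    ((hZ.integrable (i + 1)).sub (hZ.integrable i)).aestronglyMeasurable
  have hLD : ∀ᵐ ω ∂μ, |L * D ω| ≤ L * M := by
    filter_upwards [hbdd] with ω hω
    rw [abs_mul, abs_of_nonneg hL]
    exact mul_le_mul_of_nonneg_left hω hL
  have hmean : μ[fun ω => L * D ω|ℱ i] =ᵐ[μ] 0 := by
    filter_upwards [condExp_smul (m := ℱ i) (μ := μ) L D,
      hZ.condExp_add_one_sub_ae_eq_zero i] with ω hsmul (hzero : μ[D|ℱ i] ω = 0)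
    change μ[L • D|ℱ i] ω = 0
    rw [hsmul, Pi.smul_apply, hzero, smul_zero]
  have hvar' : ∀ᵐ ω ∂μ, μ[fun ω => (L * D ω) ^ 2|ℱ i] ω ≤ L ^ 2 * s := by
    have hsq : (fun ω => (L * D ω) ^ 2) = L ^ 2 • fun ω => D ω ^ 2 := by
      ext ω; simp only [Pi.smul_apply, smul_eq_mul]; ring
    rw [hsq]
    filter_upwards [hvar, condExp_smul (m := ℱ i) (μ := μ) (L ^ 2) fun ω => D ω ^ 2]
      with ω h hsmul
    rw [hsmul, Pi.smul_apply, smul_eq_mul]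
    exact mul_le_mul_of_nonneg_left h (sq_nonneg L)
  simpa [mul_div_right_comm] using
    condExp_exp_le_of_abs_le (ℱ.le i) (hD.const_mul L) hLM hLD hmean hvar'

theorem measureReal_ge_le_exp (hZ : Martingale Z ℱ μ) {n : ℕ} {M L t : ℝ} {v : ℕ → ℝ}
    (hL : 0 ≤ L) (hLM : L * M < 3) (hbdd : ∀ i < n, ∀ᵐ ω ∂μ, |Z (i + 1) ω - Z i ω| ≤ M)
    (hvar : ∀ i < n, ∀ᵐ ω ∂μ, μ[fun ω => (Z (i + 1) ω - Z i ω) ^ 2|ℱ i] ω ≤ v i) :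
    μ.real {ω | t ≤ Z n ω - Z 0 ω} ≤
      exp (-L * t + L ^ 2 / (2 * (1 - L * M / 3)) * ∑ i ∈ range n, v i) := by
  set Y : ℕ → Ω → ℝ := fun i ω => L * (Z (i + 1) ω - Z i ω)
  have hY i : StronglyMeasurable[ℱ (i + 1)] (Y i) :=
    ((hZ.stronglyAdapted (i + 1)).sub
      ((hZ.stronglyAdapted i).mono (ℱ.mono i.le_succ))).const_mul L
  have hY' i : AEStronglyMeasurable (Y i) μ := ((hY i).mono (ℱ.le _)).aestronglyMeasurable
  have hYbdd : ∀ i < n, ∀ᵐ ω ∂μ, |Y i ω| ≤ L * M := by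
    intro i hi
    filter_upwards [hbdd i hi] with ω hω
    rw [abs_mul, abs_of_nonneg hL]
    exact mul_le_mul_of_nonneg_left hω hL
  have hcond : ∀ i < n, μ[fun ω => exp (Y i ω)|ℱ i] ≤ᵐ[μ]
      fun _ => exp (L ^ 2 / (2 * (1 - L * M / 3)) * v i) := fun i hi =>
    hZ.condExp_exp_mul_add_one_sub_le hL hLM (hbdd i hi) (hvar i hi)
  have htelescope : (fun ω => exp (L * (Z n ω - Z 0 ω))) =
      fun ω => exp (∑ i ∈ range n, Y i ω) := by
    ext ω; rw [← mul_sum, sum_range_sub (fun i => Z i ω)]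
  calc μ.real {ω | t ≤ Z n ω - Z 0 ω}
      ≤ exp (-L * t) * ProbabilityTheory.mgf (fun ω => Z n ω - Z 0 ω) μ L :=
        ProbabilityTheory.measure_ge_le_exp_mul_mgf t hL
          (htelescope ▸ integrable_exp_sum_range hY' hYbdd)
    _ ≤ exp (-L * t) * exp (∑ i ∈ range n, L ^ 2 / (2 * (1 - L * M / 3)) * v i) := by
        rw [ProbabilityTheory.mgf]
        dsimp only
        rw [htelescope]
        gcongr
        exact integral_exp_sum_range_le hY hYbdd hcond
    _ = _ := by rw [← exp_add, ← mul_sum]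

end MeasureTheory.Martingale

end

/-- Freedman's inequality: for a martingale `Z` with increments bounded by `c i` and
conditional variances bounded by `σ i ^ 2`, and `M` an upper bound on the `c i`,
`P(Z_n − Z_0 ≥ t) ≤ exp(−t²/(2Σσᵢ² + 2Mt/3))`. -/
theorem freedman_inequality
    {Ω : Type*} {m0 : MeasurableSpace Ω} {μ : Measure Ω} [IsProbabilityMeasure μ]
    (ℱ : Filtration ℕ m0) (Z : ℕ → Ω → ℝ) (n : ℕ) (hn : 1 ≤ n)
    (c σ : ℕ → ℝ) (M : ℝ)
    (hmart : Martingale Z ℱ μ)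
    (hc : ∀ i, 1 ≤ i → i ≤ n → 0 < c i)
    (hbdd : ∀ i, 1 ≤ i → i ≤ n → ∀ᵐ ω ∂μ, |Z i ω - Z (i - 1) ω| ≤ c i)
    (hvar : ∀ i, 1 ≤ i → i ≤ n →
      ∀ᵐ ω ∂μ, (μ[fun ω' => (Z i ω' - Z (i - 1) ω') ^ 2|ℱ (i - 1)]) ω ≤ (σ i) ^ 2)
    (hM : ∀ i, 1 ≤ i → i ≤ n → c i ≤ M) :
    ∀ t : ℝ, 0 ≤ t →
      (μ {ω | t ≤ Z n ω - Z 0 ω}).toReal ≤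
        Real.exp (-(t ^ 2) /
          (2 * ∑ i ∈ Finset.Icc 1 n, (σ i) ^ 2 + 2 * M * t / 3)) := by
  intro t ht
  have hM0 : 0 < M := (hc 1 le_rfl hn).trans_le (hM 1 le_rfl hn)
  have hbdd' : ∀ i < n, ∀ᵐ ω ∂μ, |Z (i + 1) ω - Z i ω| ≤ M := by
    intro i hi
    filter_upwards [hbdd (i + 1) (by omega) hi] with ω hω
    exact (Nat.add_sub_cancel i 1 ▸ hω).trans (hM (i + 1) (by omega) hi)
  have hvar' : ∀ i < n,
      ∀ᵐ ω ∂μ, μ[fun ω => (Z (i + 1) ω - Z i ω) ^ 2|ℱ i] ω ≤ σ (i + 1) ^ 2 := by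
    intro i hi
    simpa using hvar (i + 1) (by omega) hi
  obtain ⟨L, hL, hLM, hexponent⟩ := exists_chernoff_exponent_le_bernstein
    (sum_nonneg fun i _ => sq_nonneg (σ i)) hM0 ht
  calc (μ {ω | t ≤ Z n ω - Z 0 ω}).toReal
      ≤ exp (-L * t + L ^ 2 / (2 * (1 - L * M / 3)) * ∑ i ∈ range n, σ (i + 1) ^ 2) :=
        hmart.measureReal_ge_le_exp hL hLM hbdd' hvar'
    _ ≤ _ := by
        rw [range_eq_Ico, sum_Ico_add' (fun i => σ i ^ 2) 0 n 1, zero_add,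
          Ico_add_one_right_eq_Icc]
        exact exp_le_exp.mpr hexponent
end
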